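/- Let G be a simple graph on n vertices with adjacency matrix A whose smallest eigenvalue τ₁ < -1 has multiplicity m₁ and eigenspace E₁. Let b = τ₁/(τ₁+1), M = A + b(J - I - A), and P = I - (1/n)J. If E₁ ⊆ 𝟙^⊥ then rank(PMP) = n - m₁ - 1, and otherwise rank(PMP) = n - m₁. -/

import Mathlib

open Matrix Module
open scoped ComplexOrder

/-! Since `(1 - b) τ₁ = b`, we have `M = (1 - b) B + b J` with `B = A - τ₁ I`, and `P J = 0` gives
`PMP = (1 - b) PBP`. As `τ₁` is the least eigenvalue, `B` is positive semidefinite with kernel `E₁`,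
so `PBPx = 0` iff `BPx = 0` and `ker PBP` is the preimage of `E₁` under `P`. Since `ker P = ℝ𝟙` and
`range P = 𝟙^⊥`, this preimage has dimension `dim (E₁ ∩ 𝟙^⊥) + 1`, and `dim (E₁ ∩ 𝟙^⊥)` is `m₁`
or `m₁ - 1` according as `E₁ ⊆ 𝟙^⊥` or not. -/

namespace Submodule

variable {K V W : Type*} [DivisionRing K] [AddCommGroup V] [Module K V] [AddCommGroup W]
  [Module K W] [FiniteDimensional K V]

theorem finrank_comap_eq_finrank_inf_range_add_finrank_ker (f : V →ₗ[K] W) (E : Submodule K W) :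
    finrank K (E.comap f) = finrank K ↥(E ⊓ LinearMap.range f) + finrank K (LinearMap.ker f) := by
  have hker_le : LinearMap.ker f ≤ E.comap f := fun x hx => by
    simp [LinearMap.mem_ker.mp hx]
  rw [← (f ∘ₗ (E.comap f).subtype).finrank_range_add_finrank_ker, LinearMap.range_comp,
    range_subtype, map_comap_eq, inf_comm, LinearMap.ker_comp,
    (comapSubtypeEquivOfLe hker_le).finrank_eq]

theorem finrank_inf_ker_add_one {E : Submodule K V} {f : Dual K V}
    (hE : ¬ E ≤ LinearMap.ker f) : finrank K ↥(E ⊓ LinearMap.ker f) + 1 = finrank K E := by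
  have hf : f ∘ₗ E.subtype ≠ 0 := fun h => hE fun x hx => LinearMap.congr_fun h ⟨x, hx⟩
  rw [← Dual.finrank_ker_add_one_of_ne_zero hf, LinearMap.ker_comp,
    finrank_comap_eq_finrank_inf_range_add_finrank_ker, range_subtype, ker_subtype, finrank_bot,
    add_zero, inf_comm]

end Submodule

section Centering

variable (ι K : Type*) [Fintype ι] [Field K]

def sumFunctional : Dual K (ι → K) := Fintype.linearCombination K 1

variable {ι K} in
@[simp]
theorem sumFunctional_apply (x : ι → K) : sumFunctional ι K x = ∑ i, x i := by
  simp [sumFunctional, Fintype.linearCombination_apply]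

variable [DecidableEq ι]

def centeringMatrix : Matrix ι ι K := 1 - (Fintype.card ι : K)⁻¹ • of fun _ _ => 1

variable {ι K}

theorem centeringMatrix_mulVec (x : ι → K) :
    centeringMatrix ι K *ᵥ x = x - ((∑ i, x i) / Fintype.card ι) • 1 := by
  have hJ : (of fun _ _ => 1 : Matrix ι ι K) *ᵥ x = (∑ i, x i) • 1 := by
    ext
    simp [mulVec, dotProduct]
  rw [centeringMatrix, sub_mulVec, one_mulVec, smul_mulVec, hJ, smul_smul, inv_mul_eq_div]

variable [CharZero K] [Nonempty ι]

theorem centeringMatrix_mul_of_one : centeringMatrix ι K * of (fun _ _ => 1) = 0 := by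
  ext i j
  simp [centeringMatrix, mul_apply, one_apply]

theorem rank_centeringMatrix_mul_smul_add_smul_of_one_mul_centeringMatrix {c : K} (hc : c ≠ 0)
    (d : K) (B : Matrix ι ι K) :
    (centeringMatrix ι K * (c • B + d • of fun _ _ => 1) * centeringMatrix ι K).rank
      = (centeringMatrix ι K * B * centeringMatrix ι K).rank := by
  rw [mul_add, add_mul, Matrix.mul_smul, Matrix.smul_mul, Matrix.mul_smul, Matrix.smul_mul,
    centeringMatrix_mul_of_one, zero_mul, smul_zero, add_zero,
    rank_smul_of_mem_nonZeroDivisors _ (mem_nonZeroDivisors_of_ne_zero hc)]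

theorem sum_centeringMatrix_mulVec (x : ι → K) : ∑ i, (centeringMatrix ι K *ᵥ x) i = 0 := by
  have hcard : (Fintype.card ι : K) ≠ 0 := Nat.cast_ne_zero.mpr Fintype.card_ne_zero
  simp [centeringMatrix_mulVec, Finset.sum_sub_distrib, mul_div_cancel₀ _ hcard]

theorem ker_centeringMatrix : LinearMap.ker (centeringMatrix ι K).mulVecLin = K ∙ 1 := by
  ext x
  rw [LinearMap.mem_ker, mulVecLin_apply, centeringMatrix_mulVec, sub_eq_zero,
    Submodule.mem_span_singleton]
  refine ⟨fun h => ⟨_, h.symm⟩, ?_⟩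
  rintro ⟨c, rfl⟩
  simp

theorem range_centeringMatrix :
    LinearMap.range (centeringMatrix ι K).mulVecLin = LinearMap.ker (sumFunctional ι K) := by
  refine le_antisymm ?_ fun x hx => ⟨x, ?_⟩
  · rintro _ ⟨x, rfl⟩
    simp [sum_centeringMatrix_mulVec]
  · simp_all [centeringMatrix_mulVec]

end Centering

theorem isHermitian_centeringMatrix {ι 𝕜 : Type*} [Fintype ι] [DecidableEq ι] [RCLike 𝕜] :
    (centeringMatrix ι 𝕜).IsHermitian := by
  ext i j
  simp [centeringMatrix, one_apply, eq_comm]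

theorem Matrix.ker_mulVecLin_sub_smul_one {n R : Type*} [Fintype n] [DecidableEq n] [CommRing R]
    (A : Matrix n n R) (μ : R) :
    LinearMap.ker (A - μ • 1).mulVecLin = Module.End.eigenspace A.mulVecLin μ := by
  ext w
  rw [Module.End.mem_eigenspace_iff, LinearMap.mem_ker, mulVecLin_apply, mulVecLin_apply,
    sub_mulVec, smul_mulVec, one_mulVec, sub_eq_zero]

theorem Matrix.PosSemidef.ker_conjTranspose_mul_mul {𝕜 m n : Type*} [RCLike 𝕜] [Fintype m]
    [Fintype n] {B : Matrix m m 𝕜} (hB : B.PosSemidef) (P : Matrix m n 𝕜) :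
    LinearMap.ker (Pᴴ * B * P).mulVecLin = (LinearMap.ker B.mulVecLin).comap P.mulVecLin := by
  ext x
  simp only [LinearMap.mem_ker, Submodule.mem_comap, mulVecLin_apply, ← mulVec_mulVec]
  refine ⟨fun h => (hB.dotProduct_mulVec_zero_iff (P *ᵥ x)).mp ?_, fun h => by simp [h]⟩
  rw [star_mulVec, ← dotProduct_mulVec, h, dotProduct_zero]

theorem Matrix.IsHermitian.posSemidef_sub_smul_one {n : Type*} [Fintype n] [DecidableEq n]
    {A : Matrix n n ℝ} (hA : A.IsHermitian) {τ : ℝ}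
    (hτ : ∀ μ : ℝ, (∃ w ≠ 0, A *ᵥ w = μ • w) → τ ≤ μ) : (A - τ • 1).PosSemidef := by
  have hB : (A - τ • 1).IsHermitian := hA.sub (by simp [IsHermitian])
  refine hB.posSemidef_iff_eigenvalues_nonneg.mpr fun i => ?_
  set v : n → ℝ := ⇑(hB.eigenvectorBasis i)
  have hv : v ≠ 0 := (WithLp.ofLp_eq_zero 2).not.mpr (hB.eigenvectorBasis.orthonormal.ne_zero i)
  have hAv : A *ᵥ v = (hB.eigenvalues i + τ) • v := by
    have := hB.mulVec_eigenvectorBasis i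
    rw [sub_mulVec, smul_mulVec, one_mulVec] at this
    rw [add_smul, ← this]
    exact (sub_add_cancel _ _).symm
  have := hτ _ ⟨v, hv, hAv⟩
  simp only [Pi.zero_apply]
  linarith

theorem Matrix.PosSemidef.rank_centeringMatrix_mul_mul_centeringMatrix {ι 𝕜 : Type*} [Fintype ι]
    [DecidableEq ι] [Nonempty ι] [RCLike 𝕜] {B : Matrix ι ι 𝕜} (hB : B.PosSemidef) :
    (centeringMatrix ι 𝕜 * B * centeringMatrix ι 𝕜).rank
      + finrank 𝕜 ↥(LinearMap.ker B.mulVecLin ⊓ LinearMap.ker (sumFunctional ι 𝕜)) + 1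
      = Fintype.card ι := by
  have hker : LinearMap.ker (centeringMatrix ι 𝕜 * B * centeringMatrix ι 𝕜).mulVecLin
      = (LinearMap.ker B.mulVecLin).comap (centeringMatrix ι 𝕜).mulVecLin := by
    nth_rw 1 [← isHermitian_centeringMatrix.eq]
    exact hB.ker_conjTranspose_mul_mul _
  rw [add_assoc, ← finrank_span_singleton (K := 𝕜) (one_ne_zero : (1 : ι → 𝕜) ≠ 0),
    ← ker_centeringMatrix, ← range_centeringMatrix,
    ← Submodule.finrank_comap_eq_finrank_inf_range_add_finrank_ker, ← hker, rank,
    LinearMap.finrank_range_add_finrank_ker, finrank_fintype_fun_eq_card]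

theorem stmt_5_general (n : ℕ) (hn : 0 < n) (G : SimpleGraph (Fin n)) [DecidableRel G.Adj]
    (A : Matrix (Fin n) (Fin n) ℝ) (hA : A = G.adjMatrix ℝ)
    (τ₁ : ℝ)
    (hτmin : ∀ μ : ℝ, (∃ w ≠ 0, A *ᵥ w = μ • w) → τ₁ ≤ μ)
    (hτ : τ₁ < -1)
    (E₁ : Submodule ℝ (Fin n → ℝ))
    (hE₁ : E₁ = Module.End.eigenspace (Matrix.mulVecLin A) τ₁)
    (m₁ : ℕ) (hm₁ : m₁ = Module.finrank ℝ E₁)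
    (b : ℝ) (hb : b = τ₁ / (τ₁ + 1))
    (J : Matrix (Fin n) (Fin n) ℝ) (hJ : J = Matrix.of fun _ _ => (1 : ℝ))
    (M : Matrix (Fin n) (Fin n) ℝ) (hM : M = A + b • (J - 1 - A))
    (P : Matrix (Fin n) (Fin n) ℝ) (hP : P = 1 - (n : ℝ)⁻¹ • J) :
    ((∀ w ∈ E₁, ∑ i, w i = 0) → (P * M * P).rank = n - m₁ - 1) ∧
    (¬ (∀ w ∈ E₁, ∑ i, w i = 0) → (P * M * P).rank = n - m₁) := by
  have : Nonempty (Fin n) := ⟨⟨0, hn⟩⟩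
  have hP' : P = centeringMatrix (Fin n) ℝ := by rw [hP, hJ, centeringMatrix, Fintype.card_fin]
  have hτ₁ : τ₁ + 1 ≠ 0 := by linarith
  have h1b : 1 - b = (τ₁ + 1)⁻¹ := by rw [hb]; field_simp; ring
  have hM' : M = (1 - b) • (A - τ₁ • 1) + b • of fun _ _ => 1 := by
    have hbτ : (1 - b) * τ₁ = b := by rw [h1b, hb, div_eq_inv_mul]
    rw [hM, hJ]
    linear_combination (norm := module) hbτ • (1 : Matrix (Fin n) (Fin n) ℝ)
  have hB := (hA ▸ G.isHermitian_adjMatrix ℝ).posSemidef_sub_smul_one hτmin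
  have hdim := hB.rank_centeringMatrix_mul_mul_centeringMatrix
  rw [ker_mulVecLin_sub_smul_one, ← hE₁, Fintype.card_fin,
    ← rank_centeringMatrix_mul_smul_add_smul_of_one_mul_centeringMatrix
      (h1b ▸ inv_ne_zero hτ₁) b, ← hM', ← hP'] at hdim
  have hsum : (∀ w ∈ E₁, ∑ i, w i = 0) ↔ E₁ ≤ LinearMap.ker (sumFunctional (Fin n) ℝ) := by
    simp [SetLike.le_def]
  refine ⟨fun h => ?_, fun h => ?_⟩
  · rw [inf_eq_left.mpr (hsum.mp h), ← hm₁] at hdim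
    omega
  · have := Submodule.finrank_inf_ker_add_one (hsum.not.mp h)
    omega

theorem stmt_5 (n : ℕ) (hn : 0 < n) (G : SimpleGraph (Fin n)) [DecidableRel G.Adj]
    (A : Matrix (Fin n) (Fin n) ℝ) (hA : A = G.adjMatrix ℝ)
    (τ₁ : ℝ)
    (hτeig : ∃ w ≠ 0, A *ᵥ w = τ₁ • w)
    (hτmin : ∀ μ : ℝ, (∃ w ≠ 0, A *ᵥ w = μ • w) → τ₁ ≤ μ)
    (hτ : τ₁ < -1)
    (E₁ : Submodule ℝ (Fin n → ℝ))
    (hE₁ : E₁ = Module.End.eigenspace (Matrix.mulVecLin A) τ₁)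
    (m₁ : ℕ) (hm₁ : m₁ = Module.finrank ℝ E₁)
    (b : ℝ) (hb : b = τ₁ / (τ₁ + 1))
    (J : Matrix (Fin n) (Fin n) ℝ) (hJ : J = Matrix.of fun _ _ => (1 : ℝ))
    (M : Matrix (Fin n) (Fin n) ℝ) (hM : M = A + b • (J - 1 - A))
    (P : Matrix (Fin n) (Fin n) ℝ) (hP : P = 1 - (n : ℝ)⁻¹ • J) :
    ((∀ w ∈ E₁, ∑ i, w i = 0) → (P * M * P).rank = n - m₁ - 1) ∧
    (¬ (∀ w ∈ E₁, ∑ i, w i = 0) → (P * M * P).rank = n - m₁) :=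
  stmt_5_general n hn G A hA τ₁ hτmin hτ E₁ hE₁ m₁ hm₁ b hb J hJ M hM P hP
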